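/- arXiv:2511.04197 — 2 statements merged into one kernel-verified Lean document; each statement's English description precedes it below -/
import Mathlib

section
/- Let u > 0 and u_ext > 0, and let F*_LLF = (u² + u_ext²)/4 − (1/2)·max(u, u_ext)·(u − u_ext) be the local Lax-Friedrichs flux. Then the boundary term BT := u³/3 + u(F*_LLF − u²/2) satisfies: BT = −u³/6 + u·u_ext²/2 − u(u − u_ext)²/4 if u ≥ u_ext, and BT = −u³/6 + u·u_ext²/2 + u(u − u_ext)²/4 if u ≤ u_ext. Moreover, for every fixed u_ext > 0 the boundary term is not bounded below in u: for every C ∈ ℝ there exists u > u_ext with BT < C. -/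
/-!
Once `u ≥ uext`, the maximum in the local Lax-Friedrichs flux is `u`, and the boundary term is
the cubic `-u³/6 + u uext²/2 - u (u - uext)²/4 ≤ u (uext²/2 - u²/6)`, which tends to `-∞`
as `u → ∞`.
-/

open Filter

namespace Burgers

/-- `u` is the interior trace and `v` the exterior data at the left boundary. -/
noncomputable def llfFlux (u v : ℝ) : ℝ := (u ^ 2 + v ^ 2) / 4 - (1 / 2) * max u v * (u - v)

/-- `u³/3` is the entropy flux and `u` the entropy variable of Burgers' equation. -/
noncomputable def boundaryTerm (F u : ℝ) : ℝ := u ^ 3 / 3 + u * (F - u ^ 2 / 2)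

theorem boundaryTerm_llfFlux_of_le {u v : ℝ} (h : v ≤ u) :
    boundaryTerm (llfFlux u v) u = -u ^ 3 / 6 + u * v ^ 2 / 2 - u * (u - v) ^ 2 / 4 := by
  rw [boundaryTerm, llfFlux, max_eq_left h]
  ring

theorem boundaryTerm_llfFlux_of_ge {u v : ℝ} (h : u ≤ v) :
    boundaryTerm (llfFlux u v) u = -u ^ 3 / 6 + u * v ^ 2 / 2 + u * (u - v) ^ 2 / 4 := by
  rw [boundaryTerm, llfFlux, max_eq_right h]
  ring

theorem boundaryTerm_llfFlux_le {u v : ℝ} (hv : v ≤ u) (hu : 0 ≤ u) :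
    boundaryTerm (llfFlux u v) u ≤ u * (v ^ 2 / 2 - u ^ 2 / 6) := by
  rw [boundaryTerm_llfFlux_of_le hv]
  nlinarith [mul_nonneg hu (sq_nonneg (u - v))]

theorem tendsto_boundaryTerm_llfFlux_atBot (v : ℝ) :
    Tendsto (fun u ↦ boundaryTerm (llfFlux u v) u) atTop atBot := by
  have hcubic : Tendsto (fun u : ℝ ↦ u * (v ^ 2 / 2 - u ^ 2 / 6)) atTop atBot := by
    refine tendsto_id.atTop_mul_atBot₀ ?_
    have hsq := (tendsto_pow_atTop two_ne_zero).const_mul_atTop_of_neg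
      (by norm_num : (-1 / 6 : ℝ) < 0)
    refine (tendsto_atBot_add_const_left _ (v ^ 2 / 2) hsq).congr fun u ↦ ?_
    ring
  refine tendsto_atBot_mono' _ ?_ hcubic
  filter_upwards [eventually_ge_atTop v, eventually_ge_atTop 0] with u hv hu
  exact boundaryTerm_llfFlux_le hv hu

end Burgers

theorem burgers_llf_flux_unbounded_general (u uext : ℝ) :
    let Fllf := (u ^ 2 + uext ^ 2) / 4 - (1 / 2) * max u uext * (u - uext)
    let BT := u ^ 3 / 3 + u * (Fllf - u ^ 2 / 2)
    ((u ≥ uext → BT = -u ^ 3 / 6 + u * uext ^ 2 / 2 - u * (u - uext) ^ 2 / 4) ∧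
     (u ≤ uext → BT = -u ^ 3 / 6 + u * uext ^ 2 / 2 + u * (u - uext) ^ 2 / 4)) ∧
    (∀ C : ℝ, ∃ u' : ℝ, u' > uext ∧
      u' ^ 3 / 3 + u' * (((u' ^ 2 + uext ^ 2) / 4 -
        (1 / 2) * max u' uext * (u' - uext)) - u' ^ 2 / 2) < C) := by
  refine ⟨⟨Burgers.boundaryTerm_llfFlux_of_le, Burgers.boundaryTerm_llfFlux_of_ge⟩,
    fun C ↦ ?_⟩
  have hbelow := (Burgers.tendsto_boundaryTerm_llfFlux_atBot uext).eventually_lt_atBot C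
  obtain ⟨u', hlt, hgt⟩ := (hbelow.and (eventually_gt_atTop uext)).exists
  exact ⟨u', hgt, hlt⟩

/-- The local Lax-Friedrichs boundary flux for Burgers yields the stated boundary
term, which is not bounded below independently of the interior state `u`. -/
theorem burgers_llf_flux_unbounded (u uext : ℝ) (hu : 0 < u) (huext : 0 < uext) :
    let Fllf := (u ^ 2 + uext ^ 2) / 4 - (1 / 2) * max u uext * (u - uext)
    let BT := u ^ 3 / 3 + u * (Fllf - u ^ 2 / 2)
    ((u ≥ uext → BT = -u ^ 3 / 6 + u * uext ^ 2 / 2 - u * (u - uext) ^ 2 / 4) ∧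
     (u ≤ uext → BT = -u ^ 3 / 6 + u * uext ^ 2 / 2 + u * (u - uext) ^ 2 / 4)) ∧
    (∀ C : ℝ, ∃ u' : ℝ, u' > uext ∧
      u' ^ 3 / 3 + u' * (((u' ^ 2 + uext ^ 2) / 4 -
        (1 / 2) * max u' uext * (u' - uext)) - u' ^ 2 / 2) < C) :=
  burgers_llf_flux_unbounded_general u uext
end

section
/- Supercritical inflow relation. Let g > 0, let the interior state satisfy h > 0 and v_n < −c, and let the exterior state satisfy h_ext > 0 and v_n^ext < −c_ext, with α = −1 + √3. Define I⁻ = diag(1,1,1), |Λ⁻| = diag(|v_n| + c, |v_n|, |v_n| − c), |Λ⁻_ext| = diag(|v_n^ext| + c_ext, |v_n^ext|, |v_n^ext| − c_ext), W⁻ = Tᵀ U, G = √(|Λ⁻_ext|) · Tᵀ U_ext, λ̄₁ = √((|v_n| + c)(|v_n^ext| + c_ext)), λ̄₂ = √(|v_n|·|v_n^ext|), λ̄₃ = √((|v_n| − c)(|v_n^ext| − c_ext)), h̄ = √(h·h_ext), and the flux F* ∈ ℝ³ with components F*₁ = (α − 1) h v_n − (α/(2g)) λ̄₁ c_ext (α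 c_ext − v_n^ext) − (α/(2g)) λ̄₃ c_ext (α c_ext + v_n^ext); F*₂ = (α/2 − 1) h v1 v_n + (1 − 2α)(g h²/2) n1 − (1/(4g)) λ̄₁ c_ext (α c_ext − v_n^ext)(α v1 − 2 c n1) − (1/(4g)) λ̄₃ c_ext (α c_ext + v_n^ext)(α v1 + 2 c n1) + λ̄₂ h̄ v_τ^ext n2; F*₃ = the same expression with v1 replaced by v2, n1 replaced by n2 in all terms except the last, and last term −λ̄₂ h̄ v_τ^ext n1. Then Mᵀ (F* − F_n) = 2 Nᵀ S T I⁻ √(|Λ⁻|) (√(|Λ⁻|) W⁻ − G). -/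
open Matrix Real

/-!
Since `v_n < -c ≤ 0`, the diagonal of `|Λ⁻|` is `(c - v_n, -v_n, -v_n - c) ≥ 0`, so
`√|Λ⁻| √|Λ⁻| = |Λ⁻|` and `√|Λ⁻| √|Λ⁻_ext| = diag(λ̄₁, λ̄₂, λ̄₃)`. The right-hand side thus
becomes `(1/g) Nᵀ diag(g, c, c) (T |Λ⁻| Tᵀ u - T diag(λ̄) Tᵀ u_ext)`, where `U = u / √(2g)` and
`U_ext = u_ext / √(2g)`, and `T D Tᵀ` has a closed form for every diagonal `D`. Componentwise,
what is left is a polynomial identity: the terms free of `λ̄` cancel by `c² = g h`,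
`α² = 2 - 2α` and `n₁² + n₂² = 1`, the `λ̄` terms by `c_ext² = g h_ext` and `c c_ext = g h̄`.
-/

theorem neg_one_add_sqrt_three_sq : (-1 + √3) ^ 2 = 2 - 2 * (-1 + √3) := by
  linear_combination sq_sqrt (show (0 : ℝ) ≤ 3 by norm_num)

theorem sqrt_mul_mul_sqrt_mul {a b b' : ℝ} (ha : 0 ≤ a) (hb : 0 ≤ b) :
    √(a * b) * √(a * b') = a * √(b * b') := by
  rw [← sqrt_mul (mul_nonneg ha hb), show a * b * (a * b') = a ^ 2 * (b * b') by ring,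
    sqrt_mul (sq_nonneg a), sqrt_sq ha]

theorem diagonal_sqrt_mul_diagonal_sqrt {a₀ a₁ a₂ : ℝ} (h₀ : 0 ≤ a₀) (h₁ : 0 ≤ a₁) (h₂ : 0 ≤ a₂)
    (b₀ b₁ b₂ : ℝ) :
    diagonal ![√a₀, √a₁, √a₂] * diagonal ![√b₀, √b₁, √b₂] =
      diagonal ![√(a₀ * b₀), √(a₁ * b₁), √(a₂ * b₂)] := by
  rw [diagonal_mul_diagonal]
  congr 1
  ext i
  fin_cases i <;> simp [sqrt_mul, *]

theorem diagonal_sqrt_mul_self {a₀ a₁ a₂ : ℝ} (h₀ : 0 ≤ a₀) (h₁ : 0 ≤ a₁) (h₂ : 0 ≤ a₂) :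
    diagonal ![√a₀, √a₁, √a₂] * diagonal ![√a₀, √a₁, √a₂] = diagonal ![a₀, a₁, a₂] := by
  rw [diagonal_mul_diagonal]
  congr 1
  ext i
  fin_cases i <;> simp [*]

theorem transform_mul_diagonal_mul_transpose (α d₀ d₁ d₂ : ℝ) :
    !![α / √2, 0, α / √2; -(1 / √2), 0, 1 / √2; 0, 1, 0] * diagonal ![d₀, d₁, d₂] *
        (!![α / √2, 0, α / √2; -(1 / √2), 0, 1 / √2; 0, 1, 0] : Matrix (Fin 3) (Fin 3) ℝ)ᵀ =
      !![α ^ 2 * (d₀ + d₂) / 2, α * (d₂ - d₀) / 2, 0;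
         α * (d₂ - d₀) / 2, (d₀ + d₂) / 2, 0;
         0, 0, d₁] := by
  ext i j
  fin_cases i <;> fin_cases j <;>
    simp [Matrix.mul_apply, Fin.sum_univ_three, vecMul, dotProduct, neg_add_eq_sub, field]

theorem mul_mulVec_sub_mulVec {n R : Type*} [Fintype n] [Ring R] (A T P Q : Matrix n n R)
    (u w : n → R) :
    (A * T * P) *ᵥ (P *ᵥ (Tᵀ *ᵥ u) - Q *ᵥ (Tᵀ *ᵥ w)) =
      A *ᵥ ((T * (P * P) * Tᵀ) *ᵥ u - (T * (P * Q) * Tᵀ) *ᵥ w) := by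
  simp only [mulVec_mulVec, mulVec_sub, Matrix.mul_assoc]

theorem swe_supercritical_inflow_relation_general
    (g h v1 v2 n1 n2 hext c vn vτ cext vne vte α : ℝ)
    (hg : 0 < g) (hh : 0 < h) (hhe : 0 < hext) (hn : n1 ^ 2 + n2 ^ 2 = 1)
    (hc : c = Real.sqrt (g * h)) (hvn : vn = n1 * v1 + n2 * v2)
    (hvτ : vτ = -n2 * v1 + n1 * v2)
    (hce : cext = Real.sqrt (g * hext))
    (hsup : vn < -c)
    (hα : α = -1 + Real.sqrt 3) :
    let T : Matrix (Fin 3) (Fin 3) ℝ :=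
      !![α / Real.sqrt 2, 0, α / Real.sqrt 2;
         -(1 / Real.sqrt 2), 0, 1 / Real.sqrt 2;
         0, 1, 0]
    let M : Matrix (Fin 3) (Fin 3) ℝ := !![g, -v1 / 2, -v2 / 2; 0, 1, 0; 0, 0, 1]
    let N : Matrix (Fin 3) (Fin 3) ℝ := !![1, 0, 0; 0, n1, n2; 0, -n2, n1]
    let S : Matrix (Fin 3) (Fin 3) ℝ :=
      (1 / Real.sqrt (2 * g)) • Matrix.diagonal ![g, c, c]
    let Iminus : Matrix (Fin 3) (Fin 3) ℝ := Matrix.diagonal ![1, 1, 1]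
    let sqrtΛ : Matrix (Fin 3) (Fin 3) ℝ :=
      Matrix.diagonal ![Real.sqrt (|vn| + c), Real.sqrt |vn|, Real.sqrt (|vn| - c)]
    let sqrtΛe : Matrix (Fin 3) (Fin 3) ℝ :=
      Matrix.diagonal
        ![Real.sqrt (|vne| + cext), Real.sqrt |vne|, Real.sqrt (|vne| - cext)]
    let U : Fin 3 → ℝ := (1 / Real.sqrt (2 * g)) • ![g * h, c * vn, c * vτ]
    let Uext : Fin 3 → ℝ :=
      (1 / Real.sqrt (2 * g)) • ![g * hext, cext * vne, cext * vte]
    let Wm : Fin 3 → ℝ := Tᵀ.mulVec U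
    let G : Fin 3 → ℝ := sqrtΛe.mulVec (Tᵀ.mulVec Uext)
    let lam1 : ℝ := Real.sqrt ((|vn| + c) * (|vne| + cext))
    let lam2 : ℝ := Real.sqrt (|vn| * |vne|)
    let lam3 : ℝ := Real.sqrt ((|vn| - c) * (|vne| - cext))
    let hbar : ℝ := Real.sqrt (h * hext)
    let Fn : Fin 3 → ℝ :=
      ![h * vn, h * v1 * vn + g / 2 * h ^ 2 * n1, h * v2 * vn + g / 2 * h ^ 2 * n2]
    let Fs : Fin 3 → ℝ :=
      ![(α - 1) * h * vn - α / (2 * g) * lam1 * cext * (α * cext - vne) -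
          α / (2 * g) * lam3 * cext * (α * cext + vne),
        (α / 2 - 1) * h * v1 * vn + (1 - 2 * α) * (g * h ^ 2 / 2) * n1 -
          1 / (4 * g) * lam1 * cext * (α * cext - vne) * (α * v1 - 2 * c * n1) -
          1 / (4 * g) * lam3 * cext * (α * cext + vne) * (α * v1 + 2 * c * n1) +
          lam2 * hbar * vte * n2,
        (α / 2 - 1) * h * v2 * vn + (1 - 2 * α) * (g * h ^ 2 / 2) * n2 -
          1 / (4 * g) * lam1 * cext * (α * cext - vne) * (α * v2 - 2 * c * n2) -
          1 / (4 * g) * lam3 * cext * (α * cext + vne) * (α * v2 + 2 * c * n2) -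
          lam2 * hbar * vte * n1]
    Mᵀ.mulVec (Fs - Fn) =
      (2 : ℝ) • (Nᵀ * S * T * Iminus * sqrtΛ).mulVec (sqrtΛ.mulVec Wm - G) := by
  intro T M N S Iminus sqrtΛ sqrtΛe U Uext Wm G lam1 lam2 lam3 hbar Fn Fs
  have hc0 : 0 ≤ c := hc ▸ sqrt_nonneg _
  have habs : |vn| = -vn := abs_of_neg (by linarith)
  have hΛ : sqrtΛ * sqrtΛ = diagonal ![-vn + c, -vn, -vn - c] := by
    simp only [sqrtΛ, habs]
    exact diagonal_sqrt_mul_self (by linarith) (by linarith) (by linarith)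
  have hΛe : sqrtΛ * sqrtΛe = diagonal ![lam1, lam2, lam3] :=
    diagonal_sqrt_mul_diagonal_sqrt (by positivity) (abs_nonneg _) (by linarith) _ _ _
  have hI : Iminus = 1 := by ext i j; fin_cases i <;> fin_cases j <;> rfl
  simp only [Wm, G, hI, Matrix.mul_one]
  rw [mul_mulVec_sub_mulVec, hΛ, hΛe, transform_mul_diagonal_mul_transpose,
    transform_mul_diagonal_mul_transpose]
  simp only [S, U, Uext, Matrix.mul_smul, mulVec_smul, ← smul_sub, smul_mulVec, smul_smul,
    one_div_mul_one_div, mul_self_sqrt (by positivity : 0 ≤ 2 * g)]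
  have hc_sq : c ^ 2 = g * h := hc ▸ sq_sqrt (by positivity)
  have hce_sq : cext ^ 2 = g * hext := hce ▸ sq_sqrt (by positivity)
  have hc_mul_ce : c * cext = g * hbar := hc ▸ hce ▸ sqrt_mul_mul_sqrt_mul hg.le hh.le
  have hα_sq : α ^ 2 = 2 - 2 * α := hα ▸ neg_one_add_sqrt_three_sq
  ext i
  fin_cases i <;>
    simp only [M, N, Fs, Fn, mulVec, dotProduct, Fin.sum_univ_three, Fin.isValue, Fin.zero_eta,
      Fin.mk_one, Fin.reduceFinMk, transpose_apply, of_apply, cons_val', cons_val, cons_val_zero,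
      cons_val_one, cons_val_fin_one, head_cons, tail_cons, mulVec_cons, mulVec_empty, mul_diagonal,
      Pi.sub_apply, Pi.add_apply, Pi.smul_apply, smul_eq_mul, Function.comp_apply,
      add_add_sub_cancel, add_self_div_two, zero_mul, mul_zero, one_mul, add_zero, zero_add] <;>
    field_simp
  · linear_combination 2 * g * h * vn * hα_sq + 2 * α * vn * hc_sq -
      α ^ 2 * (lam1 + lam3) * hce_sq
  · linear_combination 16 * α * h * g * n1 * hc_sq + 16 * vn * (n1 * vn - n2 * vτ) * hc_sq +
      16 * g * h * vn * (n1 * hvn - n2 * hvτ + v1 * hn) +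
      8 * n1 * c * α * (lam1 - lam3) * hce_sq - 16 * n2 * lam2 * vte * hc_mul_ce
  · linear_combination 16 * α * h * g * n2 * hc_sq + 16 * vn * (n2 * vn + n1 * vτ) * hc_sq +
      16 * g * h * vn * (n2 * hvn + n1 * hvτ + v2 * hn) +
      8 * n2 * c * α * (lam1 - lam3) * hce_sq + 16 * n1 * lam2 * vte * hc_mul_ce

/-- Appendix B.3 of the paper: the supercritical inflow boundary flux satisfies the
flux–SAT relation `Mᵀ (F* − F_n) = 2 Nᵀ S T I⁻ √|Λ⁻| (√|Λ⁻| W⁻ − G)`. -/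
theorem swe_supercritical_inflow_relation
    (g h v1 v2 n1 n2 hext v1e v2e c vn vτ cext vne vte α : ℝ)
    (hg : 0 < g) (hh : 0 < h) (hhe : 0 < hext) (hn : n1 ^ 2 + n2 ^ 2 = 1)
    (hc : c = Real.sqrt (g * h)) (hvn : vn = n1 * v1 + n2 * v2)
    (hvτ : vτ = -n2 * v1 + n1 * v2)
    (hce : cext = Real.sqrt (g * hext)) (hvne : vne = n1 * v1e + n2 * v2e)
    (hvte : vte = -n2 * v1e + n1 * v2e)
    (hsup : vn < -c) (hsupe : vne < -cext)
    (hα : α = -1 + Real.sqrt 3) :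
    let T : Matrix (Fin 3) (Fin 3) ℝ :=
      !![α / Real.sqrt 2, 0, α / Real.sqrt 2;
         -(1 / Real.sqrt 2), 0, 1 / Real.sqrt 2;
         0, 1, 0]
    let M : Matrix (Fin 3) (Fin 3) ℝ := !![g, -v1 / 2, -v2 / 2; 0, 1, 0; 0, 0, 1]
    let N : Matrix (Fin 3) (Fin 3) ℝ := !![1, 0, 0; 0, n1, n2; 0, -n2, n1]
    let S : Matrix (Fin 3) (Fin 3) ℝ :=
      (1 / Real.sqrt (2 * g)) • Matrix.diagonal ![g, c, c]
    let Iminus : Matrix (Fin 3) (Fin 3) ℝ := Matrix.diagonal ![1, 1, 1]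
    let sqrtΛ : Matrix (Fin 3) (Fin 3) ℝ :=
      Matrix.diagonal ![Real.sqrt (|vn| + c), Real.sqrt |vn|, Real.sqrt (|vn| - c)]
    let sqrtΛe : Matrix (Fin 3) (Fin 3) ℝ :=
      Matrix.diagonal
        ![Real.sqrt (|vne| + cext), Real.sqrt |vne|, Real.sqrt (|vne| - cext)]
    let U : Fin 3 → ℝ := (1 / Real.sqrt (2 * g)) • ![g * h, c * vn, c * vτ]
    let Uext : Fin 3 → ℝ :=
      (1 / Real.sqrt (2 * g)) • ![g * hext, cext * vne, cext * vte]
    let Wm : Fin 3 → ℝ := Tᵀ.mulVec U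
    let G : Fin 3 → ℝ := sqrtΛe.mulVec (Tᵀ.mulVec Uext)
    let lam1 : ℝ := Real.sqrt ((|vn| + c) * (|vne| + cext))
    let lam2 : ℝ := Real.sqrt (|vn| * |vne|)
    let lam3 : ℝ := Real.sqrt ((|vn| - c) * (|vne| - cext))
    let hbar : ℝ := Real.sqrt (h * hext)
    let Fn : Fin 3 → ℝ :=
      ![h * vn, h * v1 * vn + g / 2 * h ^ 2 * n1, h * v2 * vn + g / 2 * h ^ 2 * n2]
    let Fs : Fin 3 → ℝ :=
      ![(α - 1) * h * vn - α / (2 * g) * lam1 * cext * (α * cext - vne) -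
          α / (2 * g) * lam3 * cext * (α * cext + vne),
        (α / 2 - 1) * h * v1 * vn + (1 - 2 * α) * (g * h ^ 2 / 2) * n1 -
          1 / (4 * g) * lam1 * cext * (α * cext - vne) * (α * v1 - 2 * c * n1) -
          1 / (4 * g) * lam3 * cext * (α * cext + vne) * (α * v1 + 2 * c * n1) +
          lam2 * hbar * vte * n2,
        (α / 2 - 1) * h * v2 * vn + (1 - 2 * α) * (g * h ^ 2 / 2) * n2 -
          1 / (4 * g) * lam1 * cext * (α * cext - vne) * (α * v2 - 2 * c * n2) -
          1 / (4 * g) * lam3 * cext * (α * cext + vne) * (α * v2 + 2 * c * n2) -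
          lam2 * hbar * vte * n1]
    Mᵀ.mulVec (Fs - Fn) =
      (2 : ℝ) • (Nᵀ * S * T * Iminus * sqrtΛ).mulVec (sqrtΛ.mulVec Wm - G) :=
  swe_supercritical_inflow_relation_general g h v1 v2 n1 n2 hext c vn vτ cext vne vte α hg hh hhe hn
    hc hvn hvτ hce hsup hα
end
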